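/- arXiv:math/0305076 — 2 statements merged into one kernel-verified Lean document; each statement's English description precedes it below -/
import Mathlib

section
/- Let A be a closed subalgebra of C(X) separating points and containing constants, and let P be a closed subset of X that is an intersection of sets H with χ_H ∈ A (i.e., P = P̃, where P̃ = ⋂{H clopen : χ_H ∈ A, P ⊆ H}). Then A↾P is closed in C(P). -/
/-!
If `f ∈ A` satisfies `|f| < ε` on `P = P̃`, then by compactness `|f| < ε` already on some clopen
`H ⊇ P` with `χ_H ∈ A`, and `f χ_H ∈ A` agrees with `f` on `P` and has sup norm at most `ε`.
So every element of `A↾P` lifts to `A` with control of the norm, and since `A` is complete,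
the usual telescoping-series argument (Mathlib's `controlled_closure_of_complete`) shows that
the range of the restriction map is closed.
-/

open Classical Set

/-- `χ_H ∈ A`: the characteristic function of `H` belongs to `A`. -/
noncomputable def chiMem {X : Type*} [TopologicalSpace X]
    (A : Subalgebra ℂ C(X, ℂ)) (H : Set X) : Prop :=
  ∃ g ∈ A, ∀ x, g x = if x ∈ H then (1 : ℂ) else 0

/-- The restriction algebra `A↾P = {f↾P : f ∈ A}`. -/
def restrictSet {X : Type*} [TopologicalSpace X] (A : Subalgebra ℂ C(X, ℂ)) (P : Set X) :
    Set C(P, ℂ) :=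
  {g | ∃ f ∈ A, f.restrict P = g}

theorem NormedAddGroupHom.isClosed_range_of_surjectiveOnWith {G H : Type*}
    [NormedAddCommGroup G] [CompleteSpace G] [NormedAddCommGroup H]
    {f : NormedAddGroupHom G H} {C : ℝ} (hC : 0 < C) (hf : f.SurjectiveOnWith f.range C) :
    IsClosed (f.range : Set H) := by
  refine isClosed_of_closure_subset fun h hh => ?_
  obtain ⟨g, rfl, -⟩ := controlled_closure_of_complete hC one_pos hf h hh
  exact f.mem_range_self g

theorem ContinuousMap.norm_restrict_le {X E : Type*} [TopologicalSpace X] [CompactSpace X]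
    [SeminormedAddCommGroup E] (f : C(X, E)) (P : Set X) [CompactSpace P] :
    ‖f.restrict P‖ ≤ ‖f‖ :=
  (norm_le _ (norm_nonneg f)).mpr fun x => f.norm_coe_le_norm x

section ChiMem

variable {X : Type*} [TopologicalSpace X] {A : Subalgebra ℂ C(X, ℂ)}

theorem chiMem_univ (A : Subalgebra ℂ C(X, ℂ)) : chiMem A (univ : Set X) :=
  ⟨1, one_mem A, fun x => by simp⟩

theorem chiMem.inter {H₁ H₂ : Set X} (h₁ : chiMem A H₁) (h₂ : chiMem A H₂) :
    chiMem A (H₁ ∩ H₂) := by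
  obtain ⟨g₁, hg₁, he₁⟩ := h₁
  obtain ⟨g₂, hg₂, he₂⟩ := h₂
  refine ⟨g₁ * g₂, mul_mem hg₁ hg₂, fun x => ?_⟩
  rw [ContinuousMap.mul_apply, he₁, he₂]
  by_cases hx₁ : x ∈ H₁ <;> by_cases hx₂ : x ∈ H₂ <;> simp [hx₁, hx₂]

/-- The sets `H ∈ B_A` containing `P`, whose intersection is `P̃`. -/
def chiMemSupersets (A : Subalgebra ℂ C(X, ℂ)) (P : Set X) : Set (Set X) :=
  {H | IsClopen H ∧ chiMem A H ∧ P ⊆ H}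

theorem directedOn_chiMemSupersets (P : Set X) : DirectedOn (· ⊇ ·) (chiMemSupersets A P) :=
  fun H₁ h₁ H₂ h₂ => ⟨H₁ ∩ H₂, ⟨h₁.1.inter h₂.1, h₁.2.1.inter h₂.2.1, subset_inter h₁.2.2 h₂.2.2⟩,
    inter_subset_left, inter_subset_right⟩

/-- These `H` form a downward directed family of compact sets with intersection `P`. -/
theorem exists_mem_chiMemSupersets_subset [CompactSpace X] {P U : Set X}
    (hPt : P = ⋂₀ chiMemSupersets A P) (hU : IsOpen U) (hPU : P ⊆ U) :
    ∃ H ∈ chiMemSupersets A P, H ⊆ U := by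
  have : Nonempty (chiMemSupersets A P) :=
    ⟨⟨univ, isClopen_univ, chiMem_univ A, subset_univ P⟩⟩
  obtain ⟨⟨H, hH⟩, hHU⟩ := exists_subset_nhds_of_isCompact' (V := Subtype.val)
    (directedOn_chiMemSupersets P).directed_val (fun H => H.2.1.isClosed.isCompact)
    (fun H => H.2.1.isClosed) (U := U) fun x hx => hU.mem_nhds <| hPU <| by
      rwa [hPt, sInter_eq_iInter]
  exact ⟨H, hH, hHU⟩

end ChiMem

/-- Multiplying by `χ_H` for an `H ∈ B_A` on which `|f| < ε` leaves `f` unchanged on `P` and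
cuts its sup norm down to `ε`. -/
theorem exists_mem_eqOn_norm_le {X : Type*} [TopologicalSpace X] [CompactSpace X]
    {A : Subalgebra ℂ C(X, ℂ)} {P : Set X} (hPt : P = ⋂₀ chiMemSupersets A P)
    {f : C(X, ℂ)} (hf : f ∈ A) {ε : ℝ} (hε : 0 ≤ ε) (hfP : ∀ x ∈ P, ‖f x‖ < ε) :
    ∃ g ∈ A, EqOn g f P ∧ ‖g‖ ≤ ε := by
  obtain ⟨H, ⟨-, ⟨χ, hχ, hχH⟩, hPH⟩, hHU⟩ := exists_mem_chiMemSupersets_subset hPt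
    (isOpen_lt (continuous_norm.comp f.continuous) continuous_const) hfP
  refine ⟨f * χ, mul_mem hf hχ, fun x hx => by simp [hχH, hPH hx], ?_⟩
  refine (ContinuousMap.norm_le _ hε).mpr fun x => ?_
  by_cases hx : x ∈ H
  · simpa [hχH, hx] using (hHU hx : ‖f x‖ < ε).le
  · simpa [hχH, hx] using hε

noncomputable def restrictHom {X : Type*} [TopologicalSpace X] [CompactSpace X]
    (A : Subalgebra ℂ C(X, ℂ)) (P : Set X) [CompactSpace P] : NormedAddGroupHom A C(P, ℂ) :=
  AddMonoidHom.mkNormedAddGroupHom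
    { toFun := fun f => (f : C(X, ℂ)).restrict P
      map_zero' := rfl
      map_add' := fun _ _ => rfl }
    1 fun f => by rw [one_mul]; exact (f : C(X, ℂ)).norm_restrict_le P

theorem restrictHom_surjectiveOnWith {X : Type*} [TopologicalSpace X] [CompactSpace X]
    {A : Subalgebra ℂ C(X, ℂ)} {P : Set X} [CompactSpace P]
    (hPt : P = ⋂₀ chiMemSupersets A P) :
    (restrictHom A P).SurjectiveOnWith (restrictHom A P).range 2 := by
  rintro _ ⟨f, rfl⟩
  by_cases h0 : restrictHom A P f = 0
  · exact ⟨0, by simp [h0], by simp⟩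
  have hlt : ∀ x ∈ P, ‖(f : C(X, ℂ)) x‖ < 2 * ‖restrictHom A P f‖ := fun x hx =>
    ((restrictHom A P f).norm_coe_le_norm ⟨x, hx⟩).trans_lt
      (lt_two_mul_self (norm_pos_iff.mpr h0))
  obtain ⟨g, hgA, hgf, hg⟩ := exists_mem_eqOn_norm_le hPt f.2 (by positivity) hlt
  exact ⟨⟨g, hgA⟩, ContinuousMap.ext fun x => hgf x.2, hg⟩

theorem stmt4_general {X : Type*} [TopologicalSpace X] [CompactSpace X]
    (A : Subalgebra ℂ C(X, ℂ))
    (hAcl : IsClosed (A : Set C(X, ℂ)))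
    (P : Set X) (hP : IsClosed P)
    (hPt : P = ⋂₀ {H : Set X | IsClopen H ∧ chiMem A H ∧ P ⊆ H}) :
    IsClosed (restrictSet A P) := by
  have : CompactSpace P := isCompact_iff_compactSpace.mp hP.isCompact
  have : CompleteSpace A := hAcl.completeSpace_coe
  have hrange : restrictSet A P = (restrictHom A P).range := by
    ext g
    exact ⟨fun ⟨f, hf, hfg⟩ => ⟨⟨f, hf⟩, hfg⟩, fun ⟨f, hfg⟩ => ⟨f, f.2, hfg⟩⟩
  rw [hrange]
  exact NormedAddGroupHom.isClosed_range_of_surjectiveOnWith two_pos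
    (restrictHom_surjectiveOnWith hPt)

/-- If `A ≤ C(X, ℂ)` is a closed subalgebra separating points, and `P` is a closed subset
of `X` with `P = P̃ = ⋂ {H : H clopen, χ_H ∈ A, P ⊆ H}`, then `A↾P` is closed in `C(P, ℂ)`. -/
theorem stmt4 {X : Type*} [TopologicalSpace X] [CompactSpace X] [T2Space X]
    (A : Subalgebra ℂ C(X, ℂ)) (hA : A.SeparatesPoints)
    (hAcl : IsClosed (A : Set C(X, ℂ)))
    (P : Set X) (hP : IsClosed P)
    (hPt : P = ⋂₀ {H : Set X | IsClopen H ∧ chiMem A H ∧ P ⊆ H}) :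
    IsClosed (restrictSet A P) :=
  stmt4_general A hAcl P hP hPt
end

section
/- Let X be compact Hausdorff and A a closed proper subalgebra of C(X) separating points and containing constants. Then E(A) ∪ Sh(A) = X and E(A) ∩ Sh(A) ≠ ∅, where E(A) is the essential set and Sh(A) the Šilov boundary. Moreover, every isolated point p of Sh(A) is isolated in X with χ_{{p}} ∈ A, and hence the Šilov boundary of A↾E(A) is perfect when E(A) ≠ ∅. -/
/-!
Functions vanishing on an essential set `E` lie in `A`, so a Urysohn function that vanishes on
`E ∪ S` but not at a given point, or one that equals `1` on `E` and `0` on `S`, would be an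
element of `A` that vanishes on the boundary `S` without being zero.

If `p` is isolated in the Šilov boundary `S`, then `S \ {p}` is closed but not a boundary, which
yields `g ∈ A` with `g p = 1` and `‖g‖ ≤ r < 1` on `S \ {p}`. Because norms in `A` are computed
on `S`, the powers `g ^ n` converge uniformly, and point separation forces the limit to be
`χ_{p}`.

The algebra `A↾E` is closed because `E` is essential (Tietze). An isolated point `p` of its Šilov
boundary therefore gives `χ_{p} ∈ A↾E`, and adding multiples of a lift of `χ_{p}` shows that
`E \ {p}` is essential, contradicting the minimality of `E`.
-/

open Classical Set

/-- `H` is a (closed) boundary for `B`: `sup_H |f| = sup_X |f|` for all `f ∈ B`. -/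
noncomputable def IsBoundary {Y : Type*} [TopologicalSpace Y]
    (B : Subalgebra ℂ C(Y, ℂ)) (H : Set Y) : Prop :=
  IsClosed H ∧ ∀ f ∈ B, sSup ((fun y => ‖f y‖) '' H) = sSup ((fun y => ‖f y‖) '' Set.univ)

/-- `H` is essential for `A`: membership in `A` of `f ∈ C(X, ℂ)` depends only on `f↾H`. -/
def IsEssential {X : Type*} [TopologicalSpace X]
    (A : Subalgebra ℂ C(X, ℂ)) (H : Set X) : Prop :=
  IsClosed H ∧ ∀ f g : C(X, ℂ), f.restrict H = g.restrict H → (f ∈ A ↔ g ∈ A)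

/-- The restriction of `A` to `E`, as a subalgebra of `C(E, ℂ)`. -/
noncomputable def restrictAlg {X : Type*} [TopologicalSpace X] (A : Subalgebra ℂ C(X, ℂ)) (E : Set X) :
    Subalgebra ℂ C(E, ℂ) :=
  A.map (ContinuousMap.compRightAlgHom ℂ ℂ ⟨Subtype.val, continuous_subtype_val⟩)

section Boundary

variable {Y : Type*} [TopologicalSpace Y] [CompactSpace Y] {B : Subalgebra ℂ C(Y, ℂ)} {S : Set Y}

lemma bddAbove_image_norm (f : C(Y, ℂ)) (K : Set Y) : BddAbove ((fun y => ‖f y‖) '' K) :=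
  ⟨‖f‖, by rintro _ ⟨x, -, rfl⟩; exact f.norm_coe_le_norm x⟩

lemma sSup_image_norm_univ [Nonempty Y] (f : C(Y, ℂ)) :
    sSup ((fun y => ‖f y‖) '' univ) = ‖f‖ := by
  rw [ContinuousMap.norm_eq_iSup_norm, image_univ]; rfl

lemma IsBoundary.norm_le (hS : IsBoundary B S) {f : C(Y, ℂ)} (hf : f ∈ B) {c : ℝ} (hc : 0 ≤ c)
    (h : ∀ x ∈ S, ‖f x‖ ≤ c) : ‖f‖ ≤ c := by
  refine (f.norm_le hc).2 fun x => ?_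
  calc ‖f x‖ ≤ sSup ((fun y => ‖f y‖) '' univ) :=
        le_csSup (bddAbove_image_norm f univ) (mem_image_of_mem _ (mem_univ x))
    _ = sSup ((fun y => ‖f y‖) '' S) := (hS.2 f hf).symm
    _ ≤ c := Real.sSup_le (by rintro _ ⟨y, hy, rfl⟩; exact h y hy) hc

lemma IsBoundary.eq_zero_of_eqOn (hS : IsBoundary B S) {f : C(Y, ℂ)} (hf : f ∈ B)
    (h : EqOn f 0 S) : f = 0 :=
  norm_le_zero_iff.1 <| hS.norm_le hf le_rfl fun x hx => by simp [h hx]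

lemma IsBoundary.nonempty [Nonempty Y] (hS : IsBoundary B S) : S.Nonempty := by
  by_contra hSe
  rw [not_nonempty_iff_eq_empty] at hSe
  exact one_ne_zero (hS.eq_zero_of_eqOn (one_mem B) (by simp [hSe]))

lemma exists_norm_lt_of_not_isBoundary [Nonempty Y] {T : Set Y} (hT : IsClosed T)
    (h : ¬IsBoundary B T) :
    ∃ f ∈ B, ∃ m, 0 ≤ m ∧ (∀ x ∈ T, ‖f x‖ ≤ m) ∧ m < ‖f‖ := by
  obtain ⟨f, hf, hne⟩ :
      ∃ f ∈ B, sSup ((fun y => ‖f y‖) '' T) ≠ sSup ((fun y => ‖f y‖) '' univ) := by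
    by_contra! hc
    exact h ⟨hT, hc⟩
  rw [sSup_image_norm_univ] at hne
  have hle : ∀ x ∈ T, ‖f x‖ ≤ sSup ((fun y => ‖f y‖) '' T) := fun x hx =>
    le_csSup (bddAbove_image_norm f T) (mem_image_of_mem _ hx)
  refine ⟨f, hf, _, Real.sSup_nonneg (by rintro _ ⟨x, -, rfl⟩; exact norm_nonneg _), hle,
    lt_of_le_of_ne ?_ hne⟩
  exact Real.sSup_le (by rintro _ ⟨x, -, rfl⟩; exact f.norm_coe_le_norm x) (norm_nonneg f)

end Boundary

lemma exists_continuousMap_complex_zero_one {X : Type*} [TopologicalSpace X] [NormalSpace X]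
    {s t : Set X} (hs : IsClosed s) (ht : IsClosed t) (hd : Disjoint s t) :
    ∃ f : C(X, ℂ), EqOn f 0 s ∧ EqOn f 1 t := by
  obtain ⟨u, hu0, hu1, -⟩ := exists_continuous_zero_one_of_isClosed hs ht hd
  exact ⟨ContinuousMap.comp ⟨Complex.ofReal, Complex.continuous_ofReal⟩ u,
    fun x hx => by simp [hu0 hx], fun x hx => by simp [hu1 hx]⟩

section Essential

variable {X : Type*} [TopologicalSpace X] {A : Subalgebra ℂ C(X, ℂ)} {E : Set X}

lemma IsEssential.mem_of_eqOn (hE : IsEssential A E) {f a : C(X, ℂ)} (ha : a ∈ A)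
    (h : EqOn f a E) : f ∈ A :=
  (hE.2 f a (ContinuousMap.ext fun x => h x.2)).2 ha

lemma IsEssential.nonempty (hE : IsEssential A E) (hA : A ≠ ⊤) : E.Nonempty := by
  refine nonempty_iff_ne_empty.2 fun hE0 => hA (Algebra.eq_top_iff.2 fun f => ?_)
  exact hE.mem_of_eqOn (one_mem A) (by simp [hE0])

variable [CompactSpace X] [T2Space X] {S : Set X}

lemma IsEssential.union_isBoundary_eq_univ (hE : IsEssential A E) (hS : IsBoundary A S) :
    E ∪ S = univ := by
  refine eq_univ_of_forall fun x => by_contra fun hx => ?_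
  obtain ⟨f, hf0, hf1⟩ := exists_continuousMap_complex_zero_one (hE.1.union hS.1)
    isClosed_singleton (disjoint_singleton_right.2 hx)
  have hf : f = 0 := hS.eq_zero_of_eqOn (hE.mem_of_eqOn (zero_mem A) (hf0.mono subset_union_left))
    (hf0.mono subset_union_right)
  simpa [hf] using hf1 (mem_singleton x)

lemma IsEssential.inter_isBoundary_nonempty (hE : IsEssential A E) (hA : A ≠ ⊤)
    (hS : IsBoundary A S) : (E ∩ S).Nonempty := by
  obtain ⟨x, hx⟩ := hE.nonempty hA
  refine not_disjoint_iff_nonempty_inter.1 fun hd => ?_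
  obtain ⟨f, hf0, hf1⟩ := exists_continuousMap_complex_zero_one hS.1 hE.1 hd.symm
  have hf : f = 0 := hS.eq_zero_of_eqOn (hE.mem_of_eqOn (one_mem A) hf1) hf0
  simpa [hf] using hf1 hx

end Essential

section IsolatedPoint

variable {Y : Type*} [TopologicalSpace Y] [CompactSpace Y] {B : Subalgebra ℂ C(Y, ℂ)} {S : Set Y}

lemma IsBoundary.exists_peak (hS : IsBoundary B S) (hSmin : ∀ T, IsBoundary B T → S ⊆ T)
    {p : Y} (hp : p ∈ S) (hSp : IsClosed (S \ {p})) :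
    ∃ g ∈ B, g p = 1 ∧ ∃ r, 0 ≤ r ∧ r < 1 ∧ ∀ x ∈ S \ {p}, ‖g x‖ ≤ r := by
  have : Nonempty Y := ⟨p⟩
  obtain ⟨f, hf, m, hm0, hfm, hmf⟩ := exists_norm_lt_of_not_isBoundary hSp
    fun h => (hSmin _ h hp).2 rfl
  have hfp : ‖f‖ ≤ ‖f p‖ := by
    have hmax : ‖f‖ ≤ max ‖f p‖ m := hS.norm_le hf (le_max_of_le_right hm0) fun x hx => by
      by_cases hxp : x = p
      · rw [hxp]; exact le_max_left _ m
      · exact le_max_of_le_right (hfm x ⟨hx, hxp⟩)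
    exact (le_max_iff.1 hmax).resolve_right hmf.not_ge
  have hfp0 : 0 < ‖f p‖ := hm0.trans_lt (hmf.trans_le hfp)
  refine ⟨(f p)⁻¹ • f, SMulMemClass.smul_mem _ hf, inv_mul_cancel₀ (norm_pos_iff.1 hfp0),
    m / ‖f p‖, by positivity, (div_lt_one hfp0).2 (hmf.trans_le hfp), fun x hx => ?_⟩
  rw [ContinuousMap.smul_apply, norm_smul, norm_inv, inv_mul_eq_div]
  exact div_le_div_of_nonneg_right (hfm x hx) hfp0.le

lemma IsBoundary.exists_lim_pow (hB : IsClosed (B : Set C(Y, ℂ))) (hS : IsBoundary B S)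
    {p : Y} {g : C(Y, ℂ)} (hg : g ∈ B) (hgp : g p = 1) {r : ℝ} (hr0 : 0 ≤ r) (hr1 : r < 1)
    (hgr : ∀ x ∈ S \ {p}, ‖g x‖ ≤ r) :
    ∃ e ∈ B, e p = 1 ∧ ∀ x ∈ S \ {p}, e x = 0 := by
  have hstep : ∀ n : ℕ, dist (g ^ n) (g ^ (n + 1)) ≤ 2 * r ^ n := by
    intro n
    rw [dist_comm, dist_eq_norm]
    refine hS.norm_le (sub_mem (pow_mem hg _) (pow_mem hg _)) (by positivity) fun x hx => ?_
    have hval : (g ^ (n + 1) - g ^ n) x = g x ^ n * (g x - 1) := by simp; ring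
    rw [hval, norm_mul, norm_pow]
    by_cases hxp : x = p
    · simp [hxp, hgp]; positivity
    have hgx := hgr x ⟨hx, hxp⟩
    have h2 : ‖g x - 1‖ ≤ 2 := (norm_sub_le _ _).trans (by rw [norm_one]; linarith)
    calc ‖g x‖ ^ n * ‖g x - 1‖ ≤ r ^ n * 2 := by gcongr
      _ = 2 * r ^ n := mul_comm _ _
  obtain ⟨e, he⟩ := cauchySeq_tendsto_of_complete (cauchySeq_of_le_geometric r 2 hr1 hstep)
  have hev : ∀ x, Filter.Tendsto (fun n => g x ^ n) Filter.atTop (nhds (e x)) := fun x => by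
    simpa [Function.comp_def] using ((continuous_eval_const x).tendsto e).comp he
  refine ⟨e, hB.mem_of_tendsto he (Filter.Eventually.of_forall fun n => pow_mem hg n), ?_,
    fun x hx => ?_⟩
  · exact tendsto_nhds_unique (hev p) (by simp [hgp])
  · exact tendsto_nhds_unique (hev x)
      (tendsto_pow_atTop_nhds_zero_of_norm_lt_one ((hgr x hx).trans_lt hr1))

lemma IsBoundary.apply_eq_zero_of_ne (hB : B.SeparatesPoints) (hS : IsBoundary B S)
    {p : Y} {e : C(Y, ℂ)} (he : e ∈ B) (heS : ∀ x ∈ S \ {p}, e x = 0) {x : Y} (hxp : x ≠ p) :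
    e x = 0 := by
  obtain ⟨_, ⟨q, hq, rfl⟩, hqx⟩ := hB hxp
  have hq' : q - algebraMap ℂ C(Y, ℂ) (q p) ∈ B := sub_mem hq (B.algebraMap_mem _)
  have hzero : e * (q - algebraMap ℂ C(Y, ℂ) (q p)) = 0 :=
    hS.eq_zero_of_eqOn (mul_mem he hq') fun y hy => by
      by_cases hyp : y = p
      · simp [hyp]
      · simp [heS y ⟨hy, hyp⟩]
  have := congrArg (fun f : C(Y, ℂ) => f x) hzero
  simpa [sub_eq_zero, hqx] using this

lemma IsBoundary.isOpen_singleton_and_chiMem (hBc : IsClosed (B : Set C(Y, ℂ)))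
    (hB : B.SeparatesPoints) (hS : IsBoundary B S) (hSmin : ∀ T, IsBoundary B T → S ⊆ T)
    {p : Y} (hp : p ∈ S) {U : Set Y} (hU : IsOpen U) (hUS : U ∩ S = {p}) :
    IsOpen ({p} : Set Y) ∧ chiMem B {p} := by
  have hSp : S \ {p} = S ∩ Uᶜ := by
    ext x
    constructor
    · rintro ⟨hxS, hxp⟩
      exact ⟨hxS, fun hxU => hxp (hUS ▸ ⟨hxU, hxS⟩)⟩
    · rintro ⟨hxS, hxU⟩
      exact ⟨hxS, fun hxp => hxU ((mem_singleton_iff.1 hxp) ▸ (hUS ▸ mem_singleton p).1)⟩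
  obtain ⟨g, hg, hgp, r, hr0, hr1, hgr⟩ :=
    hS.exists_peak hSmin hp (hSp ▸ hS.1.inter hU.isClosed_compl)
  obtain ⟨e, he, hep, heS⟩ := hS.exists_lim_pow hBc hg hgp hr0 hr1 hgr
  have he0 : ∀ x, x ≠ p → e x = 0 := fun x => hS.apply_eq_zero_of_ne hB he heS
  have hsingle : ({p} : Set Y) = e ⁻¹' {0}ᶜ := by
    ext x
    by_cases hxp : x = p <;> simp [hxp, hep, he0]
  refine ⟨hsingle ▸ isOpen_compl_singleton.preimage (map_continuous e), e, he, fun x => ?_⟩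
  by_cases hxp : x = p <;> simp [hxp, hep, he0]

end IsolatedPoint

section Restriction

variable {X : Type*} [TopologicalSpace X] {A : Subalgebra ℂ C(X, ℂ)} {E : Set X}

lemma mem_restrictAlg_iff {h : C(E, ℂ)} : h ∈ restrictAlg A E ↔ ∃ f ∈ A, f.restrict E = h :=
  Iff.rfl

lemma restrictAlg_separatesPoints (hA : A.SeparatesPoints) :
    (restrictAlg A E).SeparatesPoints := by
  intro x y hxy
  obtain ⟨_, ⟨f, hf, rfl⟩, hfxy⟩ := hA (Subtype.coe_ne_coe.2 hxy)
  exact ⟨_, ⟨f.restrict E, mem_restrictAlg_iff.2 ⟨f, hf, rfl⟩, rfl⟩, hfxy⟩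

lemma exists_continuousMap_extension_norm_le [NormalSpace X] (hE : IsClosed E) (h : C(E, ℂ))
    {r : ℝ} (hr : 0 < r) (hh : ∀ x, ‖h x‖ ≤ r) :
    ∃ k : C(X, ℂ), (∀ x, ‖k x‖ ≤ r) ∧ k.restrict E = h := by
  have := Metric.instTietzeExtensionClosedBall ℂ (0 : ℂ) hr
  simpa using h.exists_forall_mem_restrict_eq hE (t := Metric.closedBall 0 r) (by simpa using hh)

/-- Approximate `h` on `E` by `f ∈ A`, and correct a Tietze extension of `h` by a small
extension of `h - f↾E`; the corrected functions lie in `A` because `E` is essential. -/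
lemma IsEssential.isClosed_restrictAlg [CompactSpace X] [T2Space X]
    (hAc : IsClosed (A : Set C(X, ℂ))) (hE : IsEssential A E) :
    IsClosed (restrictAlg A E : Set C(E, ℂ)) := by
  have : CompactSpace E := isCompact_iff_compactSpace.1 hE.1.isCompact
  refine isClosed_of_closure_subset fun h hh => ?_
  obtain ⟨H, hH⟩ := h.exists_restrict_eq hE.1
  refine mem_restrictAlg_iff.2 ⟨H, hAc.closure_subset_iff.2 (fun _ => id) ?_, hH⟩
  refine Metric.mem_closure_iff.2 fun ε hε => ?_
  obtain ⟨_, hb, hhb⟩ := Metric.mem_closure_iff.1 hh (ε / 2) (by positivity)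
  obtain ⟨f, hf, rfl⟩ := mem_restrictAlg_iff.1 hb
  obtain ⟨k, hk, hkE⟩ := exists_continuousMap_extension_norm_le hE.1 (h - f.restrict E)
    (r := ε / 2) (by positivity) fun x => ((h - f.restrict E).norm_coe_le_norm x).trans
      (by rw [← dist_eq_norm]; exact hhb.le)
  refine ⟨H - k, hE.mem_of_eqOn hf fun x hx => ?_, ?_⟩
  · have h1 := congrArg (fun u : C(E, ℂ) => u ⟨x, hx⟩) hH
    have h2 := congrArg (fun u : C(E, ℂ) => u ⟨x, hx⟩) hkE
    simp only [ContinuousMap.restrict_apply, ContinuousMap.sub_apply] at h1 h2 ⊢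
    rw [h2, h1]; ring
  · rw [dist_eq_norm, sub_sub_cancel]
    exact ((k.norm_le (by positivity)).2 hk).trans_lt (half_lt_self hε)

lemma IsEssential.diff_singleton (hE : IsEssential A E) {g : C(X, ℂ)} (hg : g ∈ A) {p : X}
    (hp : p ∈ E) (hgE : ∀ x ∈ E, g x = if x = p then 1 else 0) :
    IsEssential A (E \ {p}) := by
  have hEp : E \ {p} = E ∩ g ⁻¹' {0} := by
    ext x
    by_cases hxp : x = p <;> constructor <;> intro hx <;> simp_all
  refine ⟨hEp ▸ hE.1.inter (isClosed_singleton.preimage (map_continuous g)), fun f f' hff' => ?_⟩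
  have hadj : (f + (f' p - f p) • g).restrict E = f'.restrict E := by
    ext ⟨x, hx⟩
    by_cases hxp : x = p
    · simp [hxp, hgE p hp]
    · simpa [hgE x hx, hxp] using congrArg (fun u : C(↥(E \ {p}), ℂ) => u ⟨x, hx, hxp⟩) hff'
  rw [← hE.2 _ _ hadj]
  exact ⟨fun hf => add_mem hf (SMulMemClass.smul_mem _ hg), fun hf => by
    simpa using sub_mem hf (SMulMemClass.smul_mem (f' p - f p) hg)⟩

end Restriction

lemma exists_isOpen_inter_eq_singleton_of_not_accPt {X : Type*} [TopologicalSpace X] {C : Set X}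
    {p : X} (hp : p ∈ C) (h : ¬AccPt p (Filter.principal C)) :
    ∃ U : Set X, IsOpen U ∧ U ∩ C = {p} := by
  simp only [accPt_iff_nhds, not_forall, not_exists, not_and, not_not] at h
  obtain ⟨N, hN, hNC⟩ := h
  obtain ⟨U, hUN, hU, hpU⟩ := mem_nhds_iff.1 hN
  exact ⟨U, hU, Subset.antisymm (fun y hy => hNC y ⟨hUN hy.1, hy.2⟩)
    (singleton_subset_iff.2 ⟨hpU, hp⟩)⟩

/-- Let `A` be a closed proper subalgebra of `C(X, ℂ)` separating points, with essential
set `E = E(A)` (the smallest closed essential set) and Šilov boundary `S = Sh(A)` (the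
smallest closed boundary).  Then `E ∪ S = X` and `E ∩ S ≠ ∅`; every isolated point `p`
of `S` is isolated in `X` with `χ_{p} ∈ A` (so `p ∉ E(A)`); and, if `E ≠ ∅`, the Šilov
boundary of `A↾E` is perfect. -/
theorem stmt19 {X : Type*} [TopologicalSpace X] [CompactSpace X] [T2Space X]
    (A : Subalgebra ℂ C(X, ℂ)) (hA : A.SeparatesPoints)
    (hAcl : IsClosed (A : Set C(X, ℂ))) (hAne : A ≠ ⊤)
    (E : Set X) (hE : IsEssential A E) (hEmin : ∀ H : Set X, IsEssential A H → E ⊆ H)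
    (S : Set X) (hS : IsBoundary A S) (hSmin : ∀ T : Set X, IsBoundary A T → S ⊆ T) :
    E ∪ S = Set.univ ∧
      (E ∩ S).Nonempty ∧
      (∀ p ∈ S, (∃ U : Set X, IsOpen U ∧ U ∩ S = {p}) →
        IsOpen ({p} : Set X) ∧ chiMem A {p}) ∧
      (E.Nonempty →
        ∀ S' : Set E, IsBoundary (restrictAlg A E) S' →
          (∀ T : Set E, IsBoundary (restrictAlg A E) T → S' ⊆ T) →
          Perfect S' ∧ S'.Nonempty) := by
  refine ⟨hE.union_isBoundary_eq_univ hS, hE.inter_isBoundary_nonempty hAne hS,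
    fun p hp ⟨U, hU, hUS⟩ => hS.isOpen_singleton_and_chiMem hAcl hA hSmin hp hU hUS,
    fun hEne S' hS' hS'min => ?_⟩
  have : CompactSpace E := isCompact_iff_compactSpace.1 hE.1.isCompact
  have : Nonempty E := hEne.to_subtype
  refine ⟨⟨hS'.1, fun p hp => by_contra fun hacc => ?_⟩, hS'.nonempty⟩
  obtain ⟨U, hU, hUS⟩ := exists_isOpen_inter_eq_singleton_of_not_accPt hp hacc
  obtain ⟨-, _, he, hep⟩ := hS'.isOpen_singleton_and_chiMem (hE.isClosed_restrictAlg hAcl)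
    (restrictAlg_separatesPoints hA) hS'min hp hU hUS
  obtain ⟨g, hg, rfl⟩ := mem_restrictAlg_iff.1 he
  have hgE : ∀ x ∈ E, g x = if x = p then 1 else 0 := fun x hx => by
    simpa [Subtype.ext_iff] using hep ⟨x, hx⟩
  exact (hEmin _ (hE.diff_singleton hg p.2 hgE) p.2).2 rfl
end
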